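/- Fix N, D ≥ 1, matrices W^Q, W^K, W^V ∈ ℝ^{D×D}, and scalars ν > 0, τ > 0, ε > 0. For X ∈ ℝ^{N×D} with rows x₁,…,x_N, define for each i the ε-smoothed ℓ2-normalized vectors qᵢ = (W^Q)ᵀxᵢ / √(‖(W^Q)ᵀxᵢ‖₂² + ε), kᵢ = (W^K)ᵀxᵢ / √(‖(W^K)ᵀxᵢ‖₂² + ε), vᵢ = (W^V)ᵀxᵢ / √(‖(W^V)ᵀxᵢ‖₂² + ε), stack them as rows of Q, K, V ∈ ℝ^{N×D}, let P ∈ ℝ^{N×N} be the row-wise softmax of τQKᵀ, and define SCSA(X) = ν P V ∈ ℝ^{N×D}. Then SCSA, viewed as a map from ℝ^{ND} to ℝ^{ND} (entries of X flattened), is Lipschitz continuous with respect to the Euclidean norm, with Lipschitz constant at most 2N(N−1) · ν τ ε^{−1/2} ‖W^K‖₂ + 2(N−1) · ν τ ε^{−1/2} ‖W^Q‖₂ + 2N · ν ε^{−1/2} ‖(W^V)ᵀ‖₂. -/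

import Mathlib

open Matrix

/-- Scaled cosine similarity attention: rows of `X` are mapped to ε-smoothed
ℓ2-normalized queries/keys/values `qᵢ, kᵢ, vᵢ`, `P` is the row-wise softmax of
`τ Q Kᵀ`, and the output is `ν P V`. -/
noncomputable def scsa {N D : ℕ} (WQ WK WV : Matrix (Fin D) (Fin D) ℝ)
    (ν τ ε : ℝ) (X : Fin N → Fin D → ℝ) : Fin N → Fin D → ℝ :=
  let nrm : Matrix (Fin D) (Fin D) ℝ → (Fin D → ℝ) → (Fin D → ℝ) := fun W x =>
    fun d => Wᵀ.mulVec x d / Real.sqrt ((∑ e, (Wᵀ.mulVec x e) ^ 2) + ε)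
  let q : Fin N → Fin D → ℝ := fun i => nrm WQ (X i)
  let k : Fin N → Fin D → ℝ := fun j => nrm WK (X j)
  let v : Fin N → Fin D → ℝ := fun j => nrm WV (X j)
  let P : Fin N → Fin N → ℝ := fun i j =>
    Real.exp (τ * ∑ d, q i d * k j d) / ∑ l, Real.exp (τ * ∑ d, q i d * k l d)
  fun i d => ν * ∑ j, P i j * v j d

/-- The spectral norm (largest singular value) of a matrix `A`, defined as
`sup_{‖x‖₂ = 1} ‖Ax‖₂`. -/
noncomputable def specNorm {M D : ℕ} (A : Matrix (Fin M) (Fin D) ℝ) : ℝ :=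
  sSup {c : ℝ | ∃ x : EuclideanSpace ℝ (Fin D), ‖x‖ = 1 ∧
    c = ‖Matrix.toEuclideanLin A x‖}


/-!
The maps producing q, k, v are y ↦ y / √(‖y‖² + ε) composed with a linear map; this normalization
lands in the unit ball and is (2/√ε)-Lipschitz, so the rows of Q, K, V move by at most
2 ε^{-1/2} ‖W‖₂ times the displacement of the corresponding row of X (and ‖Wᵀ‖₂ = ‖W‖₂). Hence the
logits τ⟪qᵢ, kⱼ⟫ move by at most τ(‖Δqᵢ‖ + maxⱼ ‖Δkⱼ‖). Softmax is 1-Lipschitz from ℓ∞ to ℓ¹: along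
the segment a + t d its derivative is p ⊙ (d − ⟨p, d⟩), whose ℓ¹ norm is the mean absolute deviation
of d under p, bounded via Jensen by its standard deviation, hence by max |dⱼ|; for a single row the
softmax is constant, which gives the factor N − 1. Each output row therefore moves by at most
ν((N − 1)τ(‖Δqᵢ‖ + maxⱼ ‖Δkⱼ‖) + maxⱼ ‖Δvⱼ‖), and summing over rows in ℓ² costs a factor √N ≤ N on
the terms that do not depend on i.
-/

open Real Finset
open scoped Matrix.Norms.L2Operator InnerProductSpace

section Softmax

variable {ι : Type*} [Fintype ι]

noncomputable def softmax (a : ι → ℝ) (j : ι) : ℝ := exp (a j) / ∑ l, exp (a l)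

lemma softmax_nonneg (a : ι → ℝ) (j : ι) : 0 ≤ softmax a j := by
  unfold softmax; positivity

lemma sum_softmax [Nonempty ι] (a : ι → ℝ) : ∑ j, softmax a j = 1 := by
  simp only [softmax]
  rw [← Finset.sum_div, div_self (Finset.sum_pos (fun l _ => exp_pos _) univ_nonempty).ne']

lemma hasDerivAt_softmax_line [Nonempty ι] (a d : ι → ℝ) (j : ι) (t : ℝ) :
    HasDerivAt (fun t => softmax (fun l => a l + t * d l) j)
      (softmax (fun l => a l + t * d l) j *
        (d j - ∑ l, softmax (fun l => a l + t * d l) l * d l)) t := by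
  have hexp : ∀ l, HasDerivAt (fun t => exp (a l + t * d l)) (exp (a l + t * d l) * d l) t :=
    fun l => by simpa using ((hasDerivAt_mul_const (d l)).const_add (a l)).exp
  have hS : 0 < ∑ l, exp (a l + t * d l) := Finset.sum_pos (fun l _ => exp_pos _) univ_nonempty
  refine ((hexp j).div (HasDerivAt.fun_sum fun l _ => hexp l) hS.ne').congr_deriv ?_
  simp only [softmax, div_mul_eq_mul_div, ← Finset.sum_div]
  field_simp

lemma sum_mul_abs_sub_mean_le {p d : ι → ℝ} (hp : ∀ j, 0 ≤ p j) (hp1 : ∑ j, p j = 1)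
    {c r : ℝ} (hr : 0 ≤ r) (hd : ∀ j, |d j - c| ≤ r) :
    ∑ j, p j * |d j - ∑ l, p l * d l| ≤ r := by
  set m := ∑ l, p l * d l
  have hjensen : (∑ j, p j * |d j - m|) ^ 2 ≤ ∑ j, p j * |d j - m| ^ 2 :=
    (convexOn_pow 2).map_sum_le (fun j _ => hp j) hp1 (fun j _ => Set.mem_Ici.2 (abs_nonneg _))
  have hvar : ∑ j, p j * (d j - c) ^ 2 = ∑ j, p j * (d j - m) ^ 2 + (m - c) ^ 2 := by
    have : ∀ j, p j * (d j - c) ^ 2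
        = p j * (d j - m) ^ 2 + 2 * (m - c) * (p j * d j) - (m ^ 2 - c ^ 2) * p j :=
      fun j => by ring
    simp only [this, Finset.sum_sub_distrib, Finset.sum_add_distrib, ← Finset.mul_sum, hp1]
    ring
  have hdc : ∑ j, p j * (d j - c) ^ 2 ≤ r ^ 2 := by
    calc ∑ j, p j * (d j - c) ^ 2 ≤ ∑ j, p j * r ^ 2 := by
          refine Finset.sum_le_sum fun j _ => mul_le_mul_of_nonneg_left ?_ (hp j)
          exact sq_le_sq' (abs_le.1 (hd j)).1 (abs_le.1 (hd j)).2
      _ = r ^ 2 := by rw [← Finset.sum_mul, hp1, one_mul]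
  simp only [sq_abs] at hjensen
  exact abs_le_of_sq_le_sq' (by nlinarith [sq_nonneg (m - c)]) hr |>.2

lemma sum_abs_softmax_sub_le [Nonempty ι] {a b : ι → ℝ} {c r : ℝ}
    (h : ∀ j, |b j - a j - c| ≤ r) :
    ∑ j, |softmax b j - softmax a j| ≤ r := by
  obtain ⟨j₀⟩ := ‹Nonempty ι›
  have hr : 0 ≤ r := (abs_nonneg _).trans (h j₀)
  set d := fun j => b j - a j
  set s := fun j => (SignType.sign (softmax b j - softmax a j) : ℝ)
  set p := fun t j => softmax (fun l => a l + t * d l) j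
  have hp0 : p 0 = softmax a := by simp [p]
  have hp1 : p 1 = softmax b := by simp [p, d]
  have hψ : ∀ t, HasDerivAt (fun t => ∑ j, s j * p t j)
      (∑ j, s j * (p t j * (d j - ∑ l, p t l * d l))) t := fun t =>
    HasDerivAt.fun_sum fun j _ => (hasDerivAt_softmax_line a d j t).const_mul (s j)
  have hψ' : ∀ t, ‖∑ j, s j * (p t j * (d j - ∑ l, p t l * d l))‖ ≤ r := by
    intro t
    calc ‖∑ j, s j * (p t j * (d j - ∑ l, p t l * d l))‖
        ≤ ∑ j, p t j * |d j - ∑ l, p t l * d l| := by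
          refine (norm_sum_le _ _).trans (Finset.sum_le_sum fun j _ => ?_)
          rw [Real.norm_eq_abs, abs_mul, abs_mul, abs_of_nonneg (softmax_nonneg _ _)]
          refine mul_le_of_le_one_left (mul_nonneg (softmax_nonneg _ _) (abs_nonneg _)) ?_
          change |(SignType.sign (softmax b j - softmax a j) : ℝ)| ≤ 1
          rcases SignType.sign (softmax b j - softmax a j) with _ | _ | _ <;> norm_num
      _ ≤ r := sum_mul_abs_sub_mean_le (softmax_nonneg _) (sum_softmax _) hr h
  -- mean value theorem for t ↦ ⟨sign (softmax b - softmax a), softmax (a + t d)⟩ on [0, 1]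
  have hmvt := Convex.norm_image_sub_le_of_norm_hasDerivWithin_le
    (fun t _ => (hψ t).hasDerivWithinAt) (fun t _ => hψ' t) convex_univ
    (Set.mem_univ (0 : ℝ)) (Set.mem_univ 1)
  calc ∑ j, |softmax b j - softmax a j| = ∑ j, s j * p 1 j - ∑ j, s j * p 0 j := by
        simp only [hp0, hp1, ← Finset.sum_sub_distrib, ← mul_sub, s, sign_mul_self]
    _ ≤ r := by simpa using (le_abs_self _).trans hmvt

lemma sum_abs_softmax_sub_le_card_sub_one_mul [Nonempty ι] {a b : ι → ℝ} {r : ℝ}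
    (h : ∀ j, |b j - a j| ≤ r) :
    ∑ j, |softmax b j - softmax a j| ≤ (Fintype.card ι - 1) * r := by
  obtain ⟨j₀⟩ := ‹Nonempty ι›
  rcases subsingleton_or_nontrivial ι with hι | hι
  · have hcard : (Fintype.card ι : ℝ) = 1 := by
      exact_mod_cast Fintype.card_eq_one_iff.2 ⟨j₀, fun j => Subsingleton.elim j j₀⟩
    rw [hcard, sub_self, zero_mul]
    refine sum_abs_softmax_sub_le (c := b j₀ - a j₀) fun j => ?_
    rw [Subsingleton.elim j j₀, sub_self, abs_zero]
  · have hcard : (2 : ℝ) ≤ Fintype.card ι := by exact_mod_cast Fintype.one_lt_card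
    have hr : 0 ≤ r := (abs_nonneg _).trans (h j₀)
    calc ∑ j, |softmax b j - softmax a j| ≤ r :=
          sum_abs_softmax_sub_le (c := 0) fun j => by simpa using h j
      _ ≤ (Fintype.card ι - 1) * r := le_mul_of_one_le_left hr (by linarith)

end Softmax

section Normed

variable {ι E : Type*} [Fintype ι] [NormedAddCommGroup E] [NormedSpace ℝ E]

lemma norm_sum_smul_sub_sum_smul_le {p p' : ι → ℝ} (hp' : ∀ j, 0 ≤ p' j)
    (hp'1 : ∑ j, p' j = 1) {v₁ v₂ : ι → E} (hv₁ : ∀ j, ‖v₁ j‖ ≤ 1) {δ : ℝ}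
    (hv : ∀ j, ‖v₁ j - v₂ j‖ ≤ δ) :
    ‖∑ j, p j • v₁ j - ∑ j, p' j • v₂ j‖ ≤ ∑ j, |p j - p' j| + δ := by
  have hsplit : ∑ j, p j • v₁ j - ∑ j, p' j • v₂ j
      = ∑ j, ((p j - p' j) • v₁ j + p' j • (v₁ j - v₂ j)) := by
    rw [← Finset.sum_sub_distrib]
    exact Finset.sum_congr rfl fun j _ => by rw [sub_smul, smul_sub]; abel
  calc ‖∑ j, p j • v₁ j - ∑ j, p' j • v₂ j‖
      ≤ ∑ j, (|p j - p' j| * ‖v₁ j‖ + p' j * ‖v₁ j - v₂ j‖) := by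
        rw [hsplit]
        refine (norm_sum_le _ _).trans (Finset.sum_le_sum fun j _ => (norm_add_le _ _).trans ?_)
        rw [norm_smul, norm_smul, Real.norm_eq_abs, Real.norm_eq_abs, abs_of_nonneg (hp' j)]
    _ ≤ ∑ j, (|p j - p' j| * 1 + p' j * δ) := by
        gcongr with j
        · exact hv₁ j
        · exact hp' j
        · exact hv j
    _ = ∑ j, |p j - p' j| + δ := by
        simp only [mul_one, Finset.sum_add_distrib, ← Finset.sum_mul, hp'1, one_mul]

lemma abs_sqrt_sq_add_sub_sqrt_sq_add_le {ε : ℝ} (hε : 0 ≤ ε) (a b : ℝ) :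
    |√(a ^ 2 + ε) - √(b ^ 2 + ε)| ≤ |a - b| := by
  have key : ∀ a b : ℝ, √(a ^ 2 + ε) ≤ √(b ^ 2 + ε) + |a - b| := by
    intro a b
    have hb : |b| ≤ √(b ^ 2 + ε) := Real.abs_le_sqrt (le_add_of_nonneg_right hε)
    have hb' : b * (a - b) ≤ √(b ^ 2 + ε) * |a - b| := by
      calc b * (a - b) ≤ |b| * |a - b| := by rw [← abs_mul]; exact le_abs_self _
        _ ≤ _ := mul_le_mul_of_nonneg_right hb (abs_nonneg _)
    rw [Real.sqrt_le_iff]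
    refine ⟨by positivity, ?_⟩
    nlinarith [Real.sq_sqrt (show 0 ≤ b ^ 2 + ε by positivity), sq_abs (a - b)]
  rw [abs_sub_le_iff]
  constructor
  · linarith [key a b]
  · linarith [key b a, abs_sub_comm a b]

noncomputable def smoothNormalize (ε : ℝ) (y : E) : E := (√(‖y‖ ^ 2 + ε))⁻¹ • y

lemma norm_smoothNormalize_le_one {ε : ℝ} (hε : 0 ≤ ε) (y : E) :
    ‖smoothNormalize ε y‖ ≤ 1 := by
  rw [smoothNormalize, norm_smul, norm_inv, Real.norm_of_nonneg (Real.sqrt_nonneg _)]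
  refine inv_mul_le_one_of_le₀ ?_ (Real.sqrt_nonneg _)
  exact Real.le_sqrt_of_sq_le (by linarith)

lemma norm_smoothNormalize_sub_le {ε : ℝ} (hε : 0 < ε) (y z : E) :
    ‖smoothNormalize ε y - smoothNormalize ε z‖ ≤ 2 * (√ε)⁻¹ * ‖y - z‖ := by
  set s := √(‖y‖ ^ 2 + ε) with hs_def
  set t := √(‖z‖ ^ 2 + ε) with ht_def
  have hεs : 0 < √ε := Real.sqrt_pos.2 hε
  have hs : √ε ≤ s := Real.sqrt_le_sqrt (le_add_of_nonneg_left (by positivity))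
  have ht : √ε ≤ t := Real.sqrt_le_sqrt (le_add_of_nonneg_left (by positivity))
  have hs0 : 0 < s := hεs.trans_le hs
  have ht0 : 0 < t := hεs.trans_le ht
  have hzt : ‖z‖ ≤ t := Real.le_sqrt_of_sq_le (by linarith)
  have hst : |s - t| ≤ ‖y - z‖ :=
    (abs_sqrt_sq_add_sub_sqrt_sq_add_le hε.le _ _).trans (abs_norm_sub_norm_le y z)
  have hsplit : smoothNormalize ε y - smoothNormalize ε z
      = s⁻¹ • (y - z) + ((t - s) / (s * t)) • z := by
    have hcoef : (t - s) / (s * t) = s⁻¹ - t⁻¹ := by field_simp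
    rw [smoothNormalize, smoothNormalize, ← hs_def, ← ht_def, hcoef, smul_sub, sub_smul]
    abel
  have hcoef : |(t - s) / (s * t)| * ‖z‖ ≤ (√ε)⁻¹ * ‖y - z‖ :=
    calc |(t - s) / (s * t)| * ‖z‖ ≤ |t - s| / (s * t) * t := by
          rw [abs_div, abs_of_pos (mul_pos hs0 ht0)]; gcongr
      _ = |s - t| / s := by rw [abs_sub_comm]; field_simp
      _ ≤ ‖y - z‖ / √ε := div_le_div₀ (norm_nonneg _) hst hεs hs
      _ = (√ε)⁻¹ * ‖y - z‖ := by rw [div_eq_inv_mul]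
  calc ‖smoothNormalize ε y - smoothNormalize ε z‖
      ≤ s⁻¹ * ‖y - z‖ + |(t - s) / (s * t)| * ‖z‖ := by
        rw [hsplit]
        refine (norm_add_le _ _).trans_eq ?_
        rw [norm_smul, norm_smul, Real.norm_eq_abs, Real.norm_eq_abs, abs_of_pos (inv_pos.2 hs0)]
    _ ≤ (√ε)⁻¹ * ‖y - z‖ + (√ε)⁻¹ * ‖y - z‖ := by gcongr
    _ = 2 * (√ε)⁻¹ * ‖y - z‖ := by ring

end Normed

section Attention

variable {ι E : Type*} [Fintype ι] [NormedAddCommGroup E] [InnerProductSpace ℝ E]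

noncomputable def attention (ν τ : ℝ) (k v : ι → E) (q : E) : E :=
  ν • ∑ j, softmax (fun l => τ * ⟪q, k l⟫_ℝ) j • v j

lemma abs_inner_sub_inner_le {q₁ q₂ k₁ k₂ : E} (hq₂ : ‖q₂‖ ≤ 1) (hk₁ : ‖k₁‖ ≤ 1) :
    |⟪q₁, k₁⟫_ℝ - ⟪q₂, k₂⟫_ℝ| ≤ ‖q₁ - q₂‖ + ‖k₁ - k₂‖ := by
  have hsplit : ⟪q₁, k₁⟫_ℝ - ⟪q₂, k₂⟫_ℝ = ⟪q₁ - q₂, k₁⟫_ℝ + ⟪q₂, k₁ - k₂⟫_ℝ := by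
    rw [inner_sub_left, inner_sub_right]; ring
  rw [hsplit]
  refine (abs_add_le _ _).trans (add_le_add ?_ ?_)
  · exact (abs_real_inner_le_norm _ _).trans (mul_le_of_le_one_right (norm_nonneg _) hk₁)
  · exact (abs_real_inner_le_norm _ _).trans (mul_le_of_le_one_left (norm_nonneg _) hq₂)

lemma norm_attention_sub_le [Nonempty ι] {ν τ : ℝ} (hν : 0 ≤ ν) (hτ : 0 ≤ τ)
    {k₁ k₂ v₁ v₂ : ι → E} {q₁ q₂ : E} (hq₂ : ‖q₂‖ ≤ 1) (hk₁ : ∀ j, ‖k₁ j‖ ≤ 1)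
    (hv₁ : ∀ j, ‖v₁ j‖ ≤ 1) {δk δv : ℝ} (hk : ∀ j, ‖k₁ j - k₂ j‖ ≤ δk)
    (hv : ∀ j, ‖v₁ j - v₂ j‖ ≤ δv) :
    ‖attention ν τ k₁ v₁ q₁ - attention ν τ k₂ v₂ q₂‖
      ≤ ν * ((Fintype.card ι - 1) * (τ * (‖q₁ - q₂‖ + δk)) + δv) := by
  have hlogits : ∀ j, |τ * ⟪q₁, k₁ j⟫_ℝ - τ * ⟪q₂, k₂ j⟫_ℝ| ≤ τ * (‖q₁ - q₂‖ + δk) := by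
    intro j
    rw [← mul_sub, abs_mul, abs_of_nonneg hτ]
    exact mul_le_mul_of_nonneg_left
      ((abs_inner_sub_inner_le hq₂ (hk₁ j)).trans (by linarith [hk j])) hτ
  rw [attention, attention, ← smul_sub, norm_smul, Real.norm_of_nonneg hν]
  refine mul_le_mul_of_nonneg_left ?_ hν
  refine (norm_sum_smul_sub_sum_smul_le (softmax_nonneg _) (sum_softmax _) hv₁ hv).trans ?_
  gcongr
  exact sum_abs_softmax_sub_le_card_sub_one_mul hlogits

end Attention

section SpectralNorm

lemma specNorm_eq_l2_opNorm {M D : ℕ} (A : Matrix (Fin M) (Fin D) ℝ) : specNorm A = ‖A‖ := by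
  rw [specNorm, Matrix.l2_opNorm_def, ← ContinuousLinearMap.sSup_sphere_eq_norm]
  congr 1
  ext c
  simp [eq_comm]

lemma specNorm_nonneg {M D : ℕ} (A : Matrix (Fin M) (Fin D) ℝ) : 0 ≤ specNorm A :=
  specNorm_eq_l2_opNorm A ▸ norm_nonneg A

lemma specNorm_transpose {M D : ℕ} (A : Matrix (Fin M) (Fin D) ℝ) : specNorm Aᵀ = specNorm A := by
  rw [specNorm_eq_l2_opNorm, specNorm_eq_l2_opNorm, ← Matrix.conjTranspose_eq_transpose_of_trivial,
    Matrix.l2_opNorm_conjTranspose]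

lemma norm_smoothNormalize_mulVec_sub_le {M D : ℕ} {ε : ℝ} (hε : 0 < ε)
    (A : Matrix (Fin M) (Fin D) ℝ) (x y : Fin D → ℝ) :
    ‖smoothNormalize ε (WithLp.toLp 2 (A *ᵥ x)) - smoothNormalize ε (WithLp.toLp 2 (A *ᵥ y))‖
      ≤ 2 * (√ε)⁻¹ * specNorm A * ‖WithLp.toLp 2 x - WithLp.toLp 2 y‖ := by
  refine (norm_smoothNormalize_sub_le hε _ _).trans ?_
  rw [← WithLp.toLp_sub, ← Matrix.mulVec_sub, ← WithLp.toLp_sub, specNorm_eq_l2_opNorm,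
    mul_assoc (2 * (√ε)⁻¹)]
  exact mul_le_mul_of_nonneg_left (Matrix.l2_opNorm_mulVec A _) (by positivity)

end SpectralNorm

section EuclideanRows

variable {ι κ : Type*} [Fintype ι] [Fintype κ]

lemma norm_toLp_eq_sqrt_sum_sq (f : ι → ℝ) : ‖WithLp.toLp 2 f‖ = √(∑ i, f i ^ 2) := by
  simp [EuclideanSpace.norm_eq]

lemma sqrt_sum_sum_sq_sub_eq (F G : ι → κ → ℝ) :
    √(∑ i, ∑ d, (F i d - G i d) ^ 2) = √(∑ i, ‖WithLp.toLp 2 (F i) - WithLp.toLp 2 (G i)‖ ^ 2) := by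
  simp_rw [← WithLp.toLp_sub, norm_toLp_eq_sqrt_sum_sq]
  congr 1
  exact Finset.sum_congr rfl fun i _ => (Real.sq_sqrt (by positivity)).symm

lemma le_sqrt_sum_sq {g : ι → ℝ} (i : ι) : g i ≤ √(∑ j, g j ^ 2) :=
  Real.le_sqrt_of_sq_le (Finset.single_le_sum (fun j _ => sq_nonneg (g j)) (Finset.mem_univ i))

lemma sqrt_sum_sq_le_mul_sqrt_sum_sq_add {f g : ι → ℝ} {α β : ℝ} (hf : ∀ i, 0 ≤ f i)
    (hα : 0 ≤ α) (hβ : 0 ≤ β) (h : ∀ i, f i ≤ α * g i + β) :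
    √(∑ i, f i ^ 2) ≤ α * √(∑ i, g i ^ 2) + √(Fintype.card ι) * β := by
  calc √(∑ i, f i ^ 2) ≤ √(∑ i, (α * g i + β) ^ 2) :=
        Real.sqrt_le_sqrt (Finset.sum_le_sum fun i _ => pow_le_pow_left₀ (hf i) (h i) 2)
    _ = ‖α • WithLp.toLp 2 g + β • WithLp.toLp 2 (fun _ : ι => (1 : ℝ))‖ := by
        rw [← WithLp.toLp_smul, ← WithLp.toLp_smul, ← WithLp.toLp_add, norm_toLp_eq_sqrt_sum_sq]
        simp
    _ ≤ α * √(∑ i, g i ^ 2) + √(Fintype.card ι) * β := by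
        refine (norm_add_le _ _).trans_eq ?_
        rw [norm_smul, norm_smul, norm_toLp_eq_sqrt_sum_sq, norm_toLp_eq_sqrt_sum_sq,
          Real.norm_of_nonneg hα, Real.norm_of_nonneg hβ]
        simp [mul_comm]

end EuclideanRows

lemma toLp_scsa_apply {N D : ℕ} (WQ WK WV : Matrix (Fin D) (Fin D) ℝ) (ν τ ε : ℝ)
    (X : Fin N → Fin D → ℝ) (i : Fin N) :
    WithLp.toLp 2 (scsa WQ WK WV ν τ ε X i) =
      attention ν τ (fun j => smoothNormalize ε (WithLp.toLp 2 (WKᵀ *ᵥ X j)))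
        (fun j => smoothNormalize ε (WithLp.toLp 2 (WVᵀ *ᵥ X j)))
        (smoothNormalize ε (WithLp.toLp 2 (WQᵀ *ᵥ X i))) := by
  have hnormalize : ∀ v : Fin D → ℝ, smoothNormalize ε (WithLp.toLp 2 v)
      = WithLp.toLp 2 (fun d => v d / √((∑ e, v e ^ 2) + ε)) := fun v => by
    ext d
    simp [smoothNormalize, EuclideanSpace.real_norm_sq_eq, div_eq_inv_mul]
  have hinner : ∀ x y : Fin D → ℝ, ⟪WithLp.toLp 2 x, WithLp.toLp 2 y⟫_ℝ = ∑ d, x d * y d :=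
    fun x y => by simp [EuclideanSpace.inner_toLp_toLp, dotProduct, mul_comm]
  simp only [attention, hnormalize, hinner]
  ext d
  simp [scsa, softmax, Finset.mul_sum]

lemma norm_toLp_scsa_sub_le {N D : ℕ} (WQ WK WV : Matrix (Fin D) (Fin D) ℝ) {ν τ ε : ℝ}
    (hν : 0 ≤ ν) (hτ : 0 ≤ τ) (hε : 0 < ε) {X₁ X₂ : Fin N → Fin D → ℝ} {W : ℝ}
    (hW : ∀ j, ‖WithLp.toLp 2 (X₁ j) - WithLp.toLp 2 (X₂ j)‖ ≤ W) (i : Fin N) :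
    ‖WithLp.toLp 2 (scsa WQ WK WV ν τ ε X₁ i) - WithLp.toLp 2 (scsa WQ WK WV ν τ ε X₂ i)‖
      ≤ 2 * (N - 1) * ν * τ * (√ε)⁻¹ * specNorm WQ * ‖WithLp.toLp 2 (X₁ i) - WithLp.toLp 2 (X₂ i)‖
        + (2 * (N - 1) * ν * τ * (√ε)⁻¹ * specNorm WK + 2 * ν * (√ε)⁻¹ * specNorm WVᵀ) * W := by
  have : Nonempty (Fin N) := ⟨i⟩
  have hN : (0 : ℝ) ≤ N - 1 := by rw [sub_nonneg]; exact_mod_cast i.pos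
  have hnormalize : ∀ (A : Matrix (Fin D) (Fin D) ℝ) j,
      ‖smoothNormalize ε (WithLp.toLp 2 (A *ᵥ X₁ j))
          - smoothNormalize ε (WithLp.toLp 2 (A *ᵥ X₂ j))‖ ≤ 2 * (√ε)⁻¹ * specNorm A * W :=
    fun A j => (norm_smoothNormalize_mulVec_sub_le hε A _ _).trans
      (mul_le_mul_of_nonneg_left (hW j) (by have := specNorm_nonneg A; positivity))
  have hq := norm_smoothNormalize_mulVec_sub_le hε WQᵀ (X₁ i) (X₂ i)
  rw [specNorm_transpose] at hq
  rw [toLp_scsa_apply, toLp_scsa_apply]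
  refine (norm_attention_sub_le hν hτ (norm_smoothNormalize_le_one hε.le _)
    (fun j => norm_smoothNormalize_le_one hε.le _) (fun j => norm_smoothNormalize_le_one hε.le _)
    (fun j => specNorm_transpose WK ▸ hnormalize WKᵀ j) (hnormalize WVᵀ)).trans ?_
  rw [Fintype.card_fin]
  calc _ ≤ ν * ((N - 1) * (τ * (2 * (√ε)⁻¹ * specNorm WQ
          * ‖WithLp.toLp 2 (X₁ i) - WithLp.toLp 2 (X₂ i)‖ + 2 * (√ε)⁻¹ * specNorm WK * W))
          + 2 * (√ε)⁻¹ * specNorm WVᵀ * W) := by gcongr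
    _ = _ := by ring

theorem scsa_lipschitz_l2_general {N D : ℕ} (hN : 1 ≤ N)
    (WQ WK WV : Matrix (Fin D) (Fin D) ℝ) (ν τ ε : ℝ)
    (hν : 0 < ν) (hτ : 0 < τ) (hε : 0 < ε) :
    ∀ X₁ X₂ : Fin N → Fin D → ℝ,
      Real.sqrt (∑ i, ∑ d,
          (scsa WQ WK WV ν τ ε X₁ i d - scsa WQ WK WV ν τ ε X₂ i d) ^ 2) ≤
        (2 * (N : ℝ) * ((N : ℝ) - 1) * ν * τ * (Real.sqrt ε)⁻¹ * specNorm WK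
          + 2 * ((N : ℝ) - 1) * ν * τ * (Real.sqrt ε)⁻¹ * specNorm WQ
          + 2 * (N : ℝ) * ν * (Real.sqrt ε)⁻¹ * specNorm WVᵀ) *
          Real.sqrt (∑ i, ∑ d, (X₁ i d - X₂ i d) ^ 2) := by
  intro X₁ X₂
  set δ : Fin N → ℝ := fun i => ‖WithLp.toLp 2 (X₁ i) - WithLp.toLp 2 (X₂ i)‖
  set W := √(∑ i, ∑ d, (X₁ i d - X₂ i d) ^ 2)
  have hW : W = √(∑ i, δ i ^ 2) := sqrt_sum_sum_sq_sub_eq X₁ X₂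
  have hrow := norm_toLp_scsa_sub_le WQ WK WV hν.le hτ.le hε (fun j => hW ▸ le_sqrt_sum_sq j)
  have hN₁ : (0 : ℝ) ≤ N - 1 := by rw [sub_nonneg]; exact_mod_cast hN
  have := specNorm_nonneg WQ; have := specNorm_nonneg WK; have := specNorm_nonneg WVᵀ
  rw [sqrt_sum_sum_sq_sub_eq]
  calc _ ≤ 2 * (N - 1) * ν * τ * (√ε)⁻¹ * specNorm WQ * √(∑ i, δ i ^ 2)
        + √(Fintype.card (Fin N) : ℝ) * ((2 * (N - 1) * ν * τ * (√ε)⁻¹ * specNorm WK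
          + 2 * ν * (√ε)⁻¹ * specNorm WVᵀ) * W) :=
        sqrt_sum_sq_le_mul_sqrt_sum_sq_add (fun _ => norm_nonneg _) (by positivity)
          (by positivity) hrow
    _ ≤ 2 * (N - 1) * ν * τ * (√ε)⁻¹ * specNorm WQ * W
        + N * ((2 * (N - 1) * ν * τ * (√ε)⁻¹ * specNorm WK
          + 2 * ν * (√ε)⁻¹ * specNorm WVᵀ) * W) := by
        rw [← hW, Fintype.card_fin]
        gcongr
        exact Real.sqrt_le_self_iff.2 (Or.inr (by exact_mod_cast hN))
    _ = _ := by ring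

/-- scaled cosine similarity attention, viewed as a map `ℝ^{ND} → ℝ^{ND}`
with the Euclidean norm, is Lipschitz continuous with constant at most
`2N(N−1) ντ ε^{-1/2} ‖W^K‖₂ + 2(N−1) ντ ε^{-1/2} ‖W^Q‖₂ + 2N ν ε^{-1/2} ‖(W^V)ᵀ‖₂`,
where `‖·‖₂` on matrices is the spectral norm. -/
theorem scsa_lipschitz_l2 {N D : ℕ} (hN : 1 ≤ N) (hD : 1 ≤ D)
    (WQ WK WV : Matrix (Fin D) (Fin D) ℝ) (ν τ ε : ℝ)
    (hν : 0 < ν) (hτ : 0 < τ) (hε : 0 < ε) :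
    ∀ X₁ X₂ : Fin N → Fin D → ℝ,
      Real.sqrt (∑ i, ∑ d,
          (scsa WQ WK WV ν τ ε X₁ i d - scsa WQ WK WV ν τ ε X₂ i d) ^ 2) ≤
        (2 * (N : ℝ) * ((N : ℝ) - 1) * ν * τ * (Real.sqrt ε)⁻¹ * specNorm WK
          + 2 * ((N : ℝ) - 1) * ν * τ * (Real.sqrt ε)⁻¹ * specNorm WQ
          + 2 * (N : ℝ) * ν * (Real.sqrt ε)⁻¹ * specNorm WVᵀ) *
          Real.sqrt (∑ i, ∑ d, (X₁ i d - X₂ i d) ^ 2) :=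
  scsa_lipschitz_l2_general hN WQ WK WV ν τ ε hν hτ hε
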